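/- For every τ in the complex upper half-plane and every matrix (a b; c d) ∈ SL₂(ℤ) with a ≡ d ≡ 1 (mod 4) and c ≡ 0 (mod 4) (i.e., an element of Γ₁(4)), the square of the theta function satisfies the weight-1 modular transformation law θ((aτ+b)/(cτ+d))² = (cτ+d) · θ(τ)². -/

import Mathlib

open Complex

/-- Jacobi's theta function `θ(τ) = ∑_{n ∈ ℤ} e^{2πi n² τ}` on the upper half-plane. -/
noncomputable def thetaFn (τ : ℂ) : ℂ :=
  ∑' n : ℤ, Complex.exp (2 * Real.pi * Complex.I * (n : ℂ) ^ 2 * τ)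

lemma thetaFn_eq (τ : ℂ) : thetaFn τ = jacobiTheta (2 * τ) := by
  refine tsum_congr fun n => ?_
  congr 1
  ring

lemma jacobiTheta_add_int_mul_two (z : ℂ) (m : ℤ) :
    jacobiTheta (z + 2 * m) = jacobiTheta z := by
  refine tsum_congr fun n => ?_
  have h : (Real.pi : ℂ) * I * (n : ℂ) ^ 2 * (z + 2 * m) =
      Real.pi * I * (n : ℂ) ^ 2 * z + ((n ^ 2 * m : ℤ) : ℂ) * (2 * Real.pi * I) := by
    push_cast; ring
  rw [h, Complex.exp_add, Complex.exp_int_mul_two_pi_mul_I, mul_one]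

lemma thetaFn_add_int (τ : ℂ) (b : ℤ) : thetaFn (τ + b) = thetaFn τ := by
  refine tsum_congr fun n => ?_
  have h : 2 * (Real.pi : ℂ) * I * (n : ℂ) ^ 2 * (τ + b) =
      2 * Real.pi * I * (n : ℂ) ^ 2 * τ + ((n ^ 2 * b : ℤ) : ℂ) * (2 * Real.pi * I) := by
    push_cast; ring
  rw [h, Complex.exp_add, Complex.exp_int_mul_two_pi_mul_I, mul_one]

lemma jacobiTheta_sq_S {z : ℂ} (hz : 0 < z.im) :
    jacobiTheta (-1 / z) ^ 2 = (-I * z) * jacobiTheta z ^ 2 := by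
  have hz0 : z ≠ 0 := fun h => by simp [h] at hz
  have hx : (-I * z) ≠ 0 := mul_ne_zero (neg_ne_zero.mpr I_ne_zero) hz0
  have h := jacobiTheta_S_smul ⟨z, hz⟩
  rw [UpperHalfPlane.modular_S_smul] at h
  have h2 : jacobiTheta (-1 / z) = (-I * z) ^ (1 / 2 : ℂ) * jacobiTheta z := by
    rw [show (-1 / z : ℂ) = (-z)⁻¹ by rw [inv_neg]; ring]
    simpa using h
  rw [h2, mul_pow, sq, ← cpow_add _ _ hx]
  norm_num

lemma thetaFn_sq_V (m : ℤ) {τ : ℂ} (hτ : 0 < τ.im) :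
    thetaFn (τ / (4 * m * τ + 1)) ^ 2 = (4 * m * τ + 1) * thetaFn τ ^ 2 := by
  set z : ℂ := 2 * τ with hzdef
  have hz : 0 < z.im := by simp [hzdef, Complex.mul_im]; positivity
  have hz0 : z ≠ 0 := fun h => by simp [h] at hz
  have hnsq : (0 : ℝ) < Complex.normSq z := Complex.normSq_pos.mpr hz0
  set w : ℂ := -1 / z - 2 * m with hwdef
  have h1 : w.im = z.im / Complex.normSq z := by
    rw [hwdef, Complex.sub_im, neg_div, one_div, Complex.neg_im, Complex.inv_im]
    simp [Complex.mul_im]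
    ring
  have hw : 0 < w.im := by rw [h1]; positivity
  have hw0 : w ≠ 0 := fun h => by simp [h] at hw
  have ht0 : τ ≠ 0 := fun h => by simp [h] at hτ
  have hden : 4 * (m : ℂ) * τ + 1 = -(w * z) := by
    rw [hwdef, hzdef]
    field_simp
    ring
  have hden0 : 4 * (m : ℂ) * τ + 1 ≠ 0 := by
    rw [hden]; exact neg_ne_zero.mpr (mul_ne_zero hw0 hz0)
  have e2 : w = (-1 / z) + 2 * ((-m : ℤ) : ℂ) := by rw [hwdef]; push_cast; ring
  have hzt : z = 2 * τ := hzdef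
  clear_value w z
  have hwz : w * z = -(4 * (m : ℂ) * τ + 1) := by linear_combination hden
  have e1 : 2 * (τ / (4 * m * τ + 1)) = -1 / w := by
    rw [mul_div_assoc', div_eq_div_iff hden0 hw0]
    linear_combination hwz - w * hzt
  have h2 : (-I * w) * (-I * z) = 4 * (m : ℂ) * τ + 1 := by
    linear_combination (w * z) * Complex.I_sq - hden
  calc thetaFn (τ / (4 * m * τ + 1)) ^ 2
      = jacobiTheta (-1 / w) ^ 2 := by rw [thetaFn_eq, e1]
    _ = (-I * w) * jacobiTheta w ^ 2 := jacobiTheta_sq_S hw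
    _ = (-I * w) * jacobiTheta (-1 / z) ^ 2 := by
        rw [e2, jacobiTheta_add_int_mul_two]
    _ = (-I * w) * ((-I * z) * jacobiTheta z ^ 2) := by rw [jacobiTheta_sq_S hz]
    _ = (4 * m * τ + 1) * thetaFn τ ^ 2 := by rw [thetaFn_eq, ← hzt, ← mul_assoc, h2]

namespace ThetaAux

abbrev SL2Z := Matrix.SpecialLinearGroup (Fin 2) ℤ

noncomputable def den (γ : SL2Z) (τ : ℂ) : ℂ := ((γ 1 0 : ℤ) : ℂ) * τ + ((γ 1 1 : ℤ) : ℂ)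

noncomputable def mob (γ : SL2Z) (τ : ℂ) : ℂ :=
  (((γ 0 0 : ℤ) : ℂ) * τ + ((γ 0 1 : ℤ) : ℂ)) / den γ τ

lemma det_rel (γ : SL2Z) : γ 0 0 * γ 1 1 - γ 0 1 * γ 1 0 = 1 := by
  have := γ.prop
  rw [Matrix.det_fin_two] at this
  simpa using this

lemma det_rel' (γ : SL2Z) :
    ((γ 0 0 : ℤ) : ℂ) * ((γ 1 1 : ℤ) : ℂ) - ((γ 0 1 : ℤ) : ℂ) * ((γ 1 0 : ℤ) : ℂ) = 1 := by
  have := det_rel γ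
  exact_mod_cast this

lemma den_ne_zero (γ : SL2Z) {τ : ℂ} (hτ : 0 < τ.im) : den γ τ ≠ 0 := by
  intro h
  rcases eq_or_ne (γ 1 0) 0 with hc | hc
  · have hdet := det_rel γ
    rw [hc] at hdet
    have hd : γ 1 1 ≠ 0 := by intro hd; rw [hd] at hdet; simp at hdet
    have : (den γ τ).im = 0 := by rw [h]; simp
    have hre : (den γ τ).re = (γ 1 1 : ℝ) := by simp [den, hc]
    rw [h] at hre
    simp at hre
    exact hd (by exact_mod_cast hre.symm)
  · have : (den γ τ).im = (γ 1 0 : ℝ) * τ.im := by simp [den, Complex.add_im, Complex.mul_im]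
    rw [h] at this
    simp at this
    rcases this with h1 | h1
    · exact hc (by exact_mod_cast h1)
    · exact hτ.ne' h1

lemma mob_im (γ : SL2Z) {τ : ℂ} (hτ : 0 < τ.im) :
    (mob γ τ).im = τ.im / Complex.normSq (den γ τ) := by
  have hdet := det_rel γ
  have hdr : ((γ 0 0 : ℤ) : ℝ) * ((γ 1 1 : ℤ) : ℝ) - ((γ 0 1 : ℤ) : ℝ) * ((γ 1 0 : ℤ) : ℝ) = 1 := by
    exact_mod_cast congrArg (Int.cast : ℤ → ℝ) hdet
  rw [mob, Complex.div_im, div_sub_div_same]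
  congr 1
  simp only [den, Complex.add_re, Complex.add_im, Complex.mul_re, Complex.mul_im,
    Complex.intCast_re, Complex.intCast_im]
  linear_combination τ.im * hdr

lemma mob_im_pos (γ : SL2Z) {τ : ℂ} (hτ : 0 < τ.im) : 0 < (mob γ τ).im := by
  rw [mob_im γ hτ]
  exact div_pos hτ (Complex.normSq_pos.mpr (den_ne_zero γ hτ))

lemma mul_entry (γ₁ γ₂ : SL2Z) (i j : Fin 2) :
    (γ₁ * γ₂) i j = γ₁ i 0 * γ₂ 0 j + γ₁ i 1 * γ₂ 1 j := by
  show ((γ₁ * γ₂ : SL2Z) : Matrix (Fin 2) (Fin 2) ℤ) i j = _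
  rw [Matrix.SpecialLinearGroup.coe_mul, Matrix.mul_apply, Fin.sum_univ_two]

lemma den_mul (γ₁ γ₂ : SL2Z) {τ : ℂ} (hτ : 0 < τ.im) :
    den (γ₁ * γ₂) τ = den γ₁ (mob γ₂ τ) * den γ₂ τ := by
  have h2 : den γ₂ τ ≠ 0 := den_ne_zero γ₂ hτ
  have hM : mob γ₂ τ * den γ₂ τ = ((γ₂ 0 0 : ℤ) : ℂ) * τ + ((γ₂ 0 1 : ℤ) : ℂ) :=
    div_mul_cancel₀ _ h2
  rw [den, mul_entry, mul_entry, den, den]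
  simp only [den] at hM
  push_cast
  linear_combination -((γ₁ 1 0 : ℤ) : ℂ) * hM

lemma den_mul_ne_zero (γ₁ γ₂ : SL2Z) {τ : ℂ} (hτ : 0 < τ.im) :
    den γ₁ (mob γ₂ τ) ≠ 0 := den_ne_zero γ₁ (mob_im_pos γ₂ hτ)

lemma mob_mul (γ₁ γ₂ : SL2Z) {τ : ℂ} (hτ : 0 < τ.im) :
    mob (γ₁ * γ₂) τ = mob γ₁ (mob γ₂ τ) := by
  have h2 : den γ₂ τ ≠ 0 := den_ne_zero γ₂ hτ
  have h1 : den γ₁ (mob γ₂ τ) ≠ 0 := den_mul_ne_zero γ₁ γ₂ hτ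
  have hM : mob γ₂ τ * den γ₂ τ = ((γ₂ 0 0 : ℤ) : ℂ) * τ + ((γ₂ 0 1 : ℤ) : ℂ) :=
    div_mul_cancel₀ _ h2
  have hnum : (((γ₁ * γ₂) 0 0 : ℤ) : ℂ) * τ + (((γ₁ * γ₂) 0 1 : ℤ) : ℂ)
      = ((γ₁ 0 0 : ℤ) : ℂ) * (((γ₂ 0 0 : ℤ) : ℂ) * τ + ((γ₂ 0 1 : ℤ) : ℂ))
        + ((γ₁ 0 1 : ℤ) : ℂ) * den γ₂ τ := by
    rw [mul_entry, mul_entry, den]; push_cast; ring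
  rw [mob, hnum, den_mul γ₁ γ₂ hτ]
  conv_rhs => rw [mob]
  rw [div_eq_div_iff (mul_ne_zero h1 h2) h1]
  simp only [den]
  simp only [den] at hM
  linear_combination
    (-(((γ₁ 1 0 : ℤ) : ℂ) * mob γ₂ τ + ((γ₁ 1 1 : ℤ) : ℂ)) * ((γ₁ 0 0 : ℤ) : ℂ)) * hM

lemma den_one (τ : ℂ) : den 1 τ = 1 := by simp [den]

lemma mob_one (τ : ℂ) : mob 1 τ = τ := by simp [mob, den]

def Pgood (γ : SL2Z) : Prop :=
  ∀ τ : ℂ, 0 < τ.im → thetaFn (mob γ τ) ^ 2 = den γ τ * thetaFn τ ^ 2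

lemma P_mul {γ₁ γ₂ : SL2Z} (h₁ : Pgood γ₁) (h₂ : Pgood γ₂) : Pgood (γ₁ * γ₂) := by
  intro τ hτ
  rw [mob_mul γ₁ γ₂ hτ, den_mul γ₁ γ₂ hτ, h₁ _ (mob_im_pos γ₂ hτ), h₂ _ hτ]
  ring

def Tn (n : ℤ) : SL2Z := ⟨!![1, n; 0, 1], by simp [Matrix.det_fin_two]⟩
def Vm (m : ℤ) : SL2Z := ⟨!![1, 0; 4 * m, 1], by simp [Matrix.det_fin_two]⟩

@[simp] lemma Tn_00 (n : ℤ) : Tn n 0 0 = 1 := rfl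
@[simp] lemma Tn_01 (n : ℤ) : Tn n 0 1 = n := rfl
@[simp] lemma Tn_10 (n : ℤ) : Tn n 1 0 = 0 := rfl
@[simp] lemma Tn_11 (n : ℤ) : Tn n 1 1 = 1 := rfl
@[simp] lemma Vm_00 (m : ℤ) : Vm m 0 0 = 1 := rfl
@[simp] lemma Vm_01 (m : ℤ) : Vm m 0 1 = 0 := rfl
@[simp] lemma Vm_10 (m : ℤ) : Vm m 1 0 = 4 * m := rfl
@[simp] lemma Vm_11 (m : ℤ) : Vm m 1 1 = 1 := rfl

lemma Tn_neg_mul (n : ℤ) : Tn (-n) * Tn n = 1 := by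
  ext i j
  rw [mul_entry]
  fin_cases i <;> fin_cases j <;> simp

lemma Vm_neg_mul (m : ℤ) : Vm (-m) * Vm m = 1 := by
  ext i j
  rw [mul_entry]
  fin_cases i <;> fin_cases j <;> simp

lemma P_Tn (n : ℤ) : Pgood (Tn n) := by
  intro τ hτ
  have e : mob (Tn n) τ = τ + (n : ℂ) := by
    simp [mob, den]
  have e2 : den (Tn n) τ = 1 := by simp [den]
  rw [e, e2, one_mul, thetaFn_add_int]

lemma P_Vm (m : ℤ) : Pgood (Vm m) := by
  intro τ hτ
  have e : mob (Vm m) τ = τ / (4 * m * τ + 1) := by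
    simp [mob, den]
  have e2 : den (Vm m) τ = 4 * m * τ + 1 := by
    simp [den]
  rw [e, e2]
  exact thetaFn_sq_V m hτ

lemma exists_half (a c : ℤ) (hc : c ≠ 0) :
    ∃ n : ℤ, 2 * (a + n * c).natAbs ≤ c.natAbs := by
  set k : ℤ := |c| with hk
  have hkpos : 0 < k := abs_pos.mpr hc
  have hr0 : 0 ≤ a % k := Int.emod_nonneg a (ne_of_gt hkpos)
  have hr1 : a % k < k := Int.emod_lt_of_pos a hkpos
  have hdiv : k * (a / k) + a % k = a := Int.mul_ediv_add_emod a k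
  have habs : k = c ∨ k = -c := abs_choice c
  have hkabs : k.natAbs = c.natAbs := by rcases habs with h | h <;> omega
  obtain ⟨n, hn⟩ : ∃ n : ℤ, a + n * c = a % k := by
    rcases habs with h | h
    · exact ⟨-(a / k), by rw [← h]; linear_combination -hdiv⟩
    · exact ⟨a / k, by rw [show c = -k by omega]; linear_combination -hdiv⟩
  rcases le_or_gt (2 * (a % k)) k with h2 | h2
  · exact ⟨n, by omega⟩
  · obtain ⟨n', hn'⟩ : ∃ n' : ℤ, a + n' * c = a % k - k := by
      rcases habs with h | h
      · exact ⟨n - 1, by linear_combination hn + h⟩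
      · exact ⟨n + 1, by linear_combination hn + h⟩
    exact ⟨n', by omega⟩

lemma key : ∀ N : ℕ, ∀ γ : SL2Z, (γ 1 0).natAbs ≤ N →
    γ 0 0 % 4 = 1 → γ 1 1 % 4 = 1 → γ 1 0 % 4 = 0 → Pgood γ := by
  intro N
  induction N using Nat.strong_induction_on with
  | _ N IH =>
  intro γ hN ha hd hc
  by_cases hc0 : γ 1 0 = 0
  · have hdet := det_rel γ
    rw [hc0, mul_zero, sub_zero] at hdet
    have ha1 : γ 0 0 = 1 ∨ γ 0 0 = -1 :=
      Int.isUnit_iff.mp (IsUnit.of_mul_eq_one _ hdet)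
    have ha1 : γ 0 0 = 1 := by omega
    have hd1 : γ 1 1 = 1 := by rw [ha1, one_mul] at hdet; exact hdet
    intro τ hτ
    have e : mob γ τ = τ + ((γ 0 1 : ℤ) : ℂ) := by
      rw [mob, den, hc0, ha1, hd1]
      push_cast
      simp
    have e2 : den γ τ = 1 := by
      rw [den, hc0, hd1]; push_cast; simp
    rw [e, e2, one_mul, thetaFn_add_int]
  · have h4 : (4 : ℤ) ∣ γ 1 0 := Int.dvd_of_emod_eq_zero hc
    obtain ⟨u, hu⟩ := h4
    obtain ⟨n, hn⟩ := exists_half (γ 0 0) (γ 1 0) hc0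
    set γ₁ : SL2Z := Tn n * γ with hγ₁
    have e00 : γ₁ 0 0 = γ 0 0 + 4 * (n * u) := by
      rw [hγ₁, mul_entry]
      simp only [Tn_00, Tn_01, one_mul]
      rw [hu]; ring
    have e01 : γ₁ 0 1 = γ 0 1 + n * γ 1 1 := by
      rw [hγ₁, mul_entry]
      simp only [Tn_00, Tn_01, one_mul]
    have e10 : γ₁ 1 0 = γ 1 0 := by
      rw [hγ₁, mul_entry]
      simp only [Tn_10, Tn_11, one_mul, zero_mul, zero_add]
    have e11 : γ₁ 1 1 = γ 1 1 := by
      rw [hγ₁, mul_entry]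
      simp only [Tn_10, Tn_11, one_mul, zero_mul, zero_add]
    have hn' : 2 * (γ 0 0 + 4 * (n * u)).natAbs ≤ (γ 1 0).natAbs := by
      rw [show γ 0 0 + 4 * (n * u) = γ 0 0 + n * γ 1 0 by rw [hu]; ring]
      exact hn
    have ha₁0 : γ₁ 0 0 ≠ 0 := by omega
    obtain ⟨m, hm⟩ := exists_half (γ 1 0) (4 * γ₁ 0 0) (by omega)
    set γ₂ : SL2Z := Vm m * γ₁ with hγ₂
    have f00 : γ₂ 0 0 = γ₁ 0 0 := by
      rw [hγ₂, mul_entry]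
      simp only [Vm_00, Vm_01, one_mul, zero_mul, add_zero]
    have f10 : γ₂ 1 0 = γ 1 0 + 4 * (m * γ₁ 0 0) := by
      rw [hγ₂, mul_entry]
      simp only [Vm_10, Vm_11, one_mul]
      rw [e10]; ring
    have f11 : γ₂ 1 1 = 4 * (m * γ₁ 0 1) + γ 1 1 := by
      rw [hγ₂, mul_entry]
      simp only [Vm_10, Vm_11, one_mul]
      rw [e11]; ring
    have hm' : 2 * (γ 1 0 + 4 * (m * γ₁ 0 0)).natAbs ≤ (4 * γ₁ 0 0).natAbs := by
      rw [show γ 1 0 + 4 * (m * γ₁ 0 0) = γ 1 0 + m * (4 * γ₁ 0 0) by ring]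
      exact hm
    clear hn hm hu
    generalize hs : n * u = s at e00 hn'
    generalize hp : m * γ₁ 0 0 = p at f10 hm'
    generalize hq : m * γ₁ 0 1 = q at f11
    have hlt : (γ₂ 1 0).natAbs < N := by omega
    have hP₂ : Pgood γ₂ := by
      refine IH (γ₂ 1 0).natAbs hlt γ₂ le_rfl ?_ ?_ ?_ <;> omega
    have hγeq : Tn (-n) * (Vm (-m) * γ₂) = γ := by
      rw [hγ₂, ← mul_assoc (Vm (-m)), Vm_neg_mul, one_mul, hγ₁, ← mul_assoc,
        Tn_neg_mul, one_mul]
    rw [← hγeq]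
    exact P_mul (P_Tn (-n)) (P_mul (P_Vm (-m)) hP₂)

end ThetaAux

/-- `θ²` is a modular form of weight 1 for `Γ₁(4)`: for `(a b; c d) ∈ SL₂(ℤ)` with
`a ≡ d ≡ 1 (mod 4)` and `c ≡ 0 (mod 4)`,
`θ((aτ+b)/(cτ+d))² = (cτ+d) θ(τ)²`. -/
theorem theta_sq_weight_one (τ : ℂ) (hτ : 0 < τ.im)
    (γ : Matrix.SpecialLinearGroup (Fin 2) ℤ)
    (ha : γ 0 0 % 4 = 1) (hd : γ 1 1 % 4 = 1) (hc : γ 1 0 % 4 = 0) :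
    thetaFn ((((γ 0 0 : ℤ) : ℂ) * τ + ((γ 0 1 : ℤ) : ℂ)) /
        (((γ 1 0 : ℤ) : ℂ) * τ + ((γ 1 1 : ℤ) : ℂ))) ^ 2 =
      (((γ 1 0 : ℤ) : ℂ) * τ + ((γ 1 1 : ℤ) : ℂ)) * thetaFn τ ^ 2 := by
  exact ThetaAux.key (γ 1 0).natAbs γ le_rfl ha hd hc τ hτ
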